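/- Let (V, ω, τ) be a complex symplectic vector space with compatible real structure and associated Hermitian form γ(x,y) = i·ω(x,τy). If L ⊂ V is a Lagrangian subspace (ω-isotropic of half dimension), then γ restricted to L is nondegenerate if and only if V = L ⊕ τL. -/

import Mathlib

open ComplexConjugate Module

/-!
For `x = τ y` in `L ∩ τL` and `z ∈ L`, compatibility and isotropy give
`ω (τ y) (τ z) = conj (ω y z) = 0`, so nondegeneracy of `γ` on `L` forces `L ∩ τL = 0`;
as `τ` is a conjugate-linear bijection, `dim τL = dim L = n`, so the sum is all of `V`.
Conversely, if `V = L + τL` and `x ∈ L` is `γ`-orthogonal to `L`, then `ω x` vanishes on `L`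
by isotropy and on `τL` by assumption, hence everywhere, and `x = 0`.
-/

theorem LinearEquiv.finrank_map_eq_of_semilinear {R S M M₂ : Type*} [Ring R] [Ring S]
    [AddCommGroup M] [AddCommGroup M₂] [Module R M] [Module S M₂]
    {σ : R →+* S} {σ' : S →+* R} [RingHomInvPair σ σ'] [RingHomInvPair σ' σ]
    (e : M ≃ₛₗ[σ] M₂) (p : Submodule R M) :
    finrank S (p.map (e : M →ₛₗ[σ] M₂)) = finrank R p := by
  unfold finrank
  rw [← Cardinal.toNat_lift, ← lift_rank_eq_of_equiv_equiv σ (e.submoduleMap p).toAddEquiv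
    (RingHomInvPair.toRingEquiv σ σ').bijective (e.submoduleMap p).map_smulₛₗ,
    Cardinal.toNat_lift]

section

variable {V : Type*} [AddCommGroup V] [Module ℂ V]
  (ω : V →ₗ[ℂ] V →ₗ[ℂ] ℂ) (τ : V →ₗ⋆[ℂ] V) {L : Submodule ℂ V}

theorem disjoint_map_of_nondegenerate (hcompat : ∀ x y, ω (τ x) (τ y) = conj (ω x y))
    (hiso : ∀ x ∈ L, ∀ y ∈ L, ω x y = 0)
    (hγ : ∀ x ∈ L, (∀ y ∈ L, ω x (τ y) = 0) → x = 0) :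
    Disjoint L (L.map τ) := by
  refine Submodule.disjoint_def.mpr fun x hxL hxτL => ?_
  obtain ⟨y, hy, rfl⟩ := Submodule.mem_map.mp hxτL
  exact hγ _ hxL fun z hz => by rw [hcompat, hiso y hy z hz, map_zero]

theorem nondegenerate_of_codisjoint_map (hnd : ∀ x, (∀ y, ω x y = 0) → x = 0)
    (hiso : ∀ x ∈ L, ∀ y ∈ L, ω x y = 0) (hcod : Codisjoint L (L.map τ)) :
    ∀ x ∈ L, (∀ y ∈ L, ω x (τ y) = 0) → x = 0 := by
  intro x hx hγx
  refine hnd x fun v => ?_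
  have hv : v ∈ L ⊔ L.map τ := hcod.eq_top ▸ Submodule.mem_top
  obtain ⟨a, ha, b, hb, rfl⟩ := Submodule.mem_sup.mp hv
  obtain ⟨y, hy, rfl⟩ := Submodule.mem_map.mp hb
  rw [map_add, hiso x hx a ha, hγx y hy, add_zero]

end

theorem stmt_2_general (V : Type*) [AddCommGroup V] [Module ℂ V] [FiniteDimensional ℂ V]
    (n : ℕ) (hdim : Module.finrank ℂ V = 2 * n)
    (ω : V →ₗ[ℂ] V →ₗ[ℂ] ℂ)
    (hnd : ∀ x, (∀ y, ω x y = 0) → x = 0)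
    (τ : V → V)
    (hτadd : ∀ x y, τ (x + y) = τ x + τ y)
    (hτsmul : ∀ (c : ℂ) (x : V), τ (c • x) = conj c • τ x)
    (hτinv : ∀ x, τ (τ x) = x)
    (hcompat : ∀ x y, ω (τ x) (τ y) = conj (ω x y))
    (L : Submodule ℂ V) (hL : Module.finrank ℂ L = n)
    (hiso : ∀ x ∈ L, ∀ y ∈ L, ω x y = 0) :
    (∀ x ∈ L, (∀ y ∈ L, Complex.I * ω x (τ y) = 0) → x = 0)
      ↔ IsCompl L (Submodule.span ℂ (τ '' (L : Set V))) := by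
  let τₗ : V →ₗ⋆[ℂ] V := ⟨⟨τ, hτadd⟩, hτsmul⟩
  have hspan : Submodule.span ℂ (τ '' (L : Set V)) = L.map τₗ := by
    change Submodule.span ℂ (τₗ '' L) = _
    rw [← Submodule.map_coe, Submodule.span_eq]
  have hτL : finrank ℂ (L.map τₗ) = n :=
    (LinearEquiv.ofInvolutive τₗ hτinv).finrank_map_eq_of_semilinear L ▸ hL
  have hdimle : finrank ℂ V ≤ finrank ℂ L + finrank ℂ (L.map τₗ) := by omega
  simp only [mul_eq_zero, Complex.I_ne_zero, false_or]
  rw [hspan]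
  exact ⟨fun hγ => (Submodule.isCompl_iff_disjoint _ _ hdimle).mpr
      (disjoint_map_of_nondegenerate ω τₗ hcompat hiso hγ),
    fun hcompl => nondegenerate_of_codisjoint_map ω τₗ hnd hiso hcompl.codisjoint⟩

/-- For a complex symplectic vector space `(V,ω)` with compatible real
structure `τ` and associated Hermitian form `γ(x,y) = i·ω(x,τy)`, the restriction of
`γ` to a Lagrangian subspace `L` is nondegenerate iff `V = L ⊕ τL`. -/
theorem stmt_2 (V : Type*) [AddCommGroup V] [Module ℂ V] [FiniteDimensional ℂ V]
    (n : ℕ) (hdim : Module.finrank ℂ V = 2 * n)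
    (ω : V →ₗ[ℂ] V →ₗ[ℂ] ℂ)
    (halt : ∀ x, ω x x = 0)
    (hnd : ∀ x, (∀ y, ω x y = 0) → x = 0)
    (τ : V → V)
    (hτadd : ∀ x y, τ (x + y) = τ x + τ y)
    (hτsmul : ∀ (c : ℂ) (x : V), τ (c • x) = conj c • τ x)
    (hτinv : ∀ x, τ (τ x) = x)
    (hcompat : ∀ x y, ω (τ x) (τ y) = conj (ω x y))
    (L : Submodule ℂ V) (hL : Module.finrank ℂ L = n)
    (hiso : ∀ x ∈ L, ∀ y ∈ L, ω x y = 0) :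
    (∀ x ∈ L, (∀ y ∈ L, Complex.I * ω x (τ y) = 0) → x = 0)
      ↔ IsCompl L (Submodule.span ℂ (τ '' (L : Set V))) :=
  stmt_2_general V n hdim ω hnd τ hτadd hτsmul hτinv hcompat L hL hiso
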